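/- arXiv:2211.15964 — 6 statements merged into one kernel-verified Lean document; each statement's English description precedes it below -/
import Mathlib

section
/- Let {Aₙ} be a sequence of events and ℱ a sub-σ-algebra such that P(Aₙ | ℱ) → 0 almost surely as n → ∞. If for some m ≥ 0 the series ∑ₙ P(Aₙᶜ ∩ Aₙ₊₁ᶜ ∩ ⋯ ∩ A_{n+m-1}ᶜ ∩ A_{n+m} | ℱ) converges almost surely, then P(limsup Aₙ | ℱ) = 0 almost surely. -/
open MeasureTheory Filter

noncomputable def cprob {Ω : Type*} {mΩ : MeasurableSpace Ω} (μ : Measure Ω)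
    (𝓕 : MeasurableSpace Ω) (A : Set Ω) : Ω → ℝ :=
  μ[A.indicator (fun _ => (1 : ℝ)) | 𝓕]

lemma int_ind {Ω : Type*} {mΩ : MeasurableSpace Ω} (μ : Measure Ω) [IsFiniteMeasure μ]
    {s : Set Ω} (hs : MeasurableSet s) :
    Integrable (s.indicator fun _ => (1:ℝ)) μ :=
  (integrable_const (1:ℝ)).indicator hs

lemma cprob_nonneg {Ω : Type*} (𝓕 : MeasurableSpace Ω) {mΩ : MeasurableSpace Ω}
    (μ : Measure Ω) (s : Set Ω) : 0 ≤ᵐ[μ] cprob μ 𝓕 s :=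
  condExp_nonneg (by filter_upwards with ω using Set.indicator_nonneg (by simp) ω)

lemma cprob_le_one {Ω : Type*} (𝓕 : MeasurableSpace Ω) {mΩ : MeasurableSpace Ω}
    (μ : Measure Ω) [IsProbabilityMeasure μ] (h𝓕 : 𝓕 ≤ mΩ)
    {s : Set Ω} (hs : MeasurableSet s) : cprob μ 𝓕 s ≤ᵐ[μ] fun _ => (1:ℝ) := by
  have h := condExp_mono (μ := μ) (m := 𝓕) (f := s.indicator fun _ => (1:ℝ))
    (g := fun _ => (1:ℝ)) (int_ind μ hs) (integrable_const (1:ℝ))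
    (by filter_upwards with ω using Set.indicator_le_self' (by simp) ω)
  have h2 : μ[(fun _ => (1:ℝ)) | 𝓕] = fun _ => (1:ℝ) := condExp_const h𝓕 (1:ℝ)
  rwa [h2] at h

/-- conditional Borel-Cantelli, first half -/
lemma cond_bc {Ω : Type*} (𝓕 : MeasurableSpace Ω) {mΩ : MeasurableSpace Ω} (μ : Measure Ω)
    [IsProbabilityMeasure μ] (h𝓕 : 𝓕 ≤ mΩ)
    (B : ℕ → Set Ω) (hB : ∀ n, MeasurableSet (B n))
    (hsum : ∀ᵐ ω ∂μ, Summable fun n => cprob μ 𝓕 (B n) ω) :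
    μ (limsup B atTop) = 0 := by
  haveI : SigmaFinite (μ.trim h𝓕) := by
    have : IsFiniteMeasure (μ.trim h𝓕) := isFiniteMeasure_trim h𝓕
    infer_instance
  set f : ℕ → Ω → ℝ := fun n => cprob μ 𝓕 (B n) with hf
  set F : ℕ → Set Ω := fun c => {ω | ∀ N, ∑ n ∈ Finset.range N, f n ω ≤ (c : ℝ)} with hF
  have hFmeas : ∀ c, MeasurableSet[𝓕] (F c) := by
    intro c
    have : F c = ⋂ N, {ω | ∑ n ∈ Finset.range N, f n ω ≤ (c : ℝ)} := by
      ext ω; simp [hF]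
    rw [this]
    refine MeasurableSet.iInter fun N => ?_
    exact measurableSet_le (Finset.measurable_sum _ fun n _ =>
      (stronglyMeasurable_condExp (m := 𝓕)).measurable) measurable_const
  have hcover : ∀ᵐ ω ∂μ, ω ∈ ⋃ c : ℕ, F c := by
    have hnn : ∀ᵐ ω ∂μ, ∀ n, 0 ≤ f n ω := ae_all_iff.2 fun n => cprob_nonneg 𝓕 μ (B n)
    filter_upwards [hsum, hnn] with ω hs hn
    refine Set.mem_iUnion.2 ⟨⌈∑' n, f n ω⌉₊, fun N => ?_⟩
    exact le_trans (Summable.sum_le_tsum _ (fun n _ => hn n) hs) (Nat.le_ceil _)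
  have hkey : ∀ c : ℕ, μ (limsup B atTop ∩ F c) = 0 := by
    intro c
    have hFm : MeasurableSet (F c) := h𝓕 _ (hFmeas c)
    have hfint : ∀ n, Integrable (f n) μ := fun n => integrable_condExp
    have hint : ∀ n, ∫ ω in F c, f n ω ∂μ = (μ (F c ∩ B n)).toReal := by
      intro n
      have h1 : ∫ ω in F c, f n ω ∂μ = ∫ ω in F c, (B n).indicator (fun _ => (1:ℝ)) ω ∂μ :=
        setIntegral_condExp h𝓕 (int_ind μ (hB n)) (hFmeas c)
      rw [h1, setIntegral_indicator (hB n), setIntegral_const]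
      simp [Measure.real]
    have hpartial : ∀ N, ∑ n ∈ Finset.range N, μ (F c ∩ B n) ≤ ENNReal.ofReal c := by
      intro N
      have h1 : ∑ n ∈ Finset.range N, (μ (F c ∩ B n)).toReal ≤ (c : ℝ) := by
        have heq : ∑ n ∈ Finset.range N, (μ (F c ∩ B n)).toReal
            = ∫ ω in F c, (∑ n ∈ Finset.range N, f n ω) ∂μ := by
          rw [integral_finset_sum _ fun n _ => (hfint n).integrableOn]
          exact (Finset.sum_congr rfl fun n _ => (hint n).symm)
        rw [heq]
        calc ∫ ω in F c, (∑ n ∈ Finset.range N, f n ω) ∂μ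
            ≤ ∫ _ω in F c, (c : ℝ) ∂μ := by
              refine setIntegral_mono_on
                (integrable_finset_sum _ fun n _ => hfint n).integrableOn
                (integrable_const _).integrableOn hFm fun ω hω => hω N
          _ = (μ (F c)).toReal * c := by rw [setIntegral_const]; simp [mul_comm, Measure.real]
          _ ≤ 1 * c := by
              gcongr
              exact ENNReal.toReal_le_of_le_ofReal zero_le_one (by simp [prob_le_one])
          _ = c := one_mul _
      have hne : ∑ n ∈ Finset.range N, μ (F c ∩ B n) ≠ ⊤ :=
        (ENNReal.sum_lt_top.2 fun n _ => measure_lt_top μ _).ne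
      rw [← ENNReal.ofReal_toReal hne]
      apply ENNReal.ofReal_le_ofReal
      rwa [ENNReal.toReal_sum fun n _ => measure_ne_top _ _]
    have htsum : ∑' n, μ (F c ∩ B n) ≠ ⊤ :=
      ne_top_of_le_ne_top (by simp) (ENNReal.tsum_le_of_sum_range_le hpartial)
    have h0 : μ (limsup (fun n => F c ∩ B n) atTop) = 0 :=
      measure_limsup_atTop_eq_zero htsum
    refine measure_mono_null ?_ h0
    intro ω hω
    obtain ⟨h1, h2⟩ := hω
    rw [mem_limsup_iff_frequently_mem] at h1 ⊢
    exact h1.mono fun n hn => ⟨h2, hn⟩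
  have hsub : limsup B atTop ⊆ (⋃ c : ℕ, F c)ᶜ ∪ ⋃ c : ℕ, (limsup B atTop ∩ F c) := by
    intro ω hω
    by_cases h : ω ∈ ⋃ c : ℕ, F c
    · obtain ⟨c, hc⟩ := Set.mem_iUnion.1 h
      exact Or.inr (Set.mem_iUnion.2 ⟨c, hω, hc⟩)
    · exact Or.inl h
  refine le_antisymm ?_ zero_le
  calc μ (limsup B atTop) ≤ μ ((⋃ c : ℕ, F c)ᶜ) + μ (⋃ c : ℕ, (limsup B atTop ∩ F c)) :=
        le_trans (measure_mono hsub) (measure_union_le _ _)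
    _ ≤ 0 + ∑' c : ℕ, μ (limsup B atTop ∩ F c) := by
        gcongr
        · exact le_of_eq (ae_iff.1 hcover)
        · exact measure_iUnion_le _
    _ = 0 := by simp [hkey]

lemma main_null {Ω : Type*} (𝓕 : MeasurableSpace Ω) {mΩ : MeasurableSpace Ω} (μ : Measure Ω)
    [IsProbabilityMeasure μ] (h𝓕 : 𝓕 ≤ mΩ)
    (A : ℕ → Set Ω) (hA : ∀ n, MeasurableSet (A n)) (m : ℕ)
    (htend : ∀ᵐ ω ∂μ, Tendsto (fun n => cprob μ 𝓕 (A n) ω) atTop (nhds 0))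
    (hsum : ∀ᵐ ω ∂μ, Summable fun n =>
      cprob μ 𝓕 ((⋂ k ∈ Finset.range m, (A (n + k))ᶜ) ∩ A (n + m)) ω) :
    μ (limsup A atTop) = 0 := by
  haveI : SigmaFinite (μ.trim h𝓕) := by
    have : IsFiniteMeasure (μ.trim h𝓕) := isFiniteMeasure_trim h𝓕
    infer_instance
  set B : ℕ → Set Ω := fun n => (⋂ k ∈ Finset.range m, (A (n + k))ᶜ) ∩ A (n + m) with hBdef
  have hBmeas : ∀ n, MeasurableSet (B n) := fun n =>
    (MeasurableSet.biInter (Finset.range m).countable_toSet fun k _ => (hA _).compl).inter (hA _)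
  have hB0 : μ (limsup B atTop) = 0 := cond_bc 𝓕 μ h𝓕 B hBmeas hsum
  set U : ℕ → Set Ω := fun n => ⋃ k ∈ Finset.range m, A (n + k) with hUdef
  set D : Set Ω := ⋃ N : ℕ, ⋂ (n : ℕ) (_ : N ≤ n), U n with hDdef
  have hAtend : Tendsto (fun n => (μ (A n)).toReal) atTop (nhds 0) := by
    have heq : ∀ n, ∫ ω, cprob μ 𝓕 (A n) ω ∂μ = (μ (A n)).toReal := by
      intro n
      have h1 : ∫ ω, cprob μ 𝓕 (A n) ω ∂μ = ∫ ω, (A n).indicator (fun _ => (1:ℝ)) ω ∂μ :=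
        integral_condExp h𝓕
      rw [h1, integral_indicator (hA n), setIntegral_const]
      simp [Measure.real]
    have htend2 : Tendsto (fun n => ∫ ω, cprob μ 𝓕 (A n) ω ∂μ) atTop (nhds 0) := by
      have h0 : (0:ℝ) = ∫ _ω, (0:ℝ) ∂μ := by simp
      rw [h0]
      refine tendsto_integral_of_dominated_convergence (fun _ => (1:ℝ))
        (fun n => (stronglyMeasurable_condExp.mono h𝓕).aestronglyMeasurable)
        (integrable_const 1) (fun n => ?_) htend
      filter_upwards [cprob_nonneg 𝓕 μ (A n), cprob_le_one 𝓕 μ h𝓕 (hA n)] with ω h1 h2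
      simp only [Pi.zero_apply] at h1
      rw [Real.norm_eq_abs, abs_le]
      exact ⟨by linarith, h2⟩
    simpa [heq] using htend2
  have hD0 : μ D = 0 := by
    have hUle : ∀ N : ℕ, μ (⋂ (n : ℕ) (_ : N ≤ n), U n) = 0 := by
      intro N
      have hle : ∀ j, N ≤ j → μ (⋂ (n : ℕ) (_ : N ≤ n), U n) ≤ μ (U j) := by
        intro j hj
        exact measure_mono (Set.iInter₂_subset j hj)
      have hUtend : Tendsto (fun j => (μ (U j)).toReal) atTop (nhds 0) := by
        have hbound : ∀ j, (μ (U j)).toReal ≤ ∑ k ∈ Finset.range m, (μ (A (j + k))).toReal := by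
          intro j
          calc (μ (U j)).toReal ≤ (∑ k ∈ Finset.range m, μ (A (j + k))).toReal := by
                apply ENNReal.toReal_mono (ENNReal.sum_lt_top.2 fun k _ => measure_lt_top μ _).ne
                exact measure_biUnion_finset_le _ _
            _ = ∑ k ∈ Finset.range m, (μ (A (j + k))).toReal :=
                ENNReal.toReal_sum fun k _ => measure_ne_top _ _
        have hsumtend : Tendsto
            (fun j => ∑ k ∈ Finset.range m, (μ (A (j + k))).toReal) atTop (nhds 0) := by
          have h3 : Tendsto (fun j => ∑ k ∈ Finset.range m, (μ (A (j + k))).toReal) atTop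
              (nhds (∑ k ∈ Finset.range m, (0:ℝ))) :=
            tendsto_finset_sum _ fun k _ => hAtend.comp (tendsto_add_atTop_nat k)
          simpa using h3
        exact squeeze_zero (fun j => ENNReal.toReal_nonneg) hbound hsumtend
      have h4 : (μ (⋂ (n : ℕ) (_ : N ≤ n), U n)).toReal ≤ 0 := by
        refine ge_of_tendsto hUtend ?_
        filter_upwards [eventually_ge_atTop N] with j hj
        exact ENNReal.toReal_mono (measure_ne_top _ _) (hle j hj)
      have h2 := le_antisymm h4 ENNReal.toReal_nonneg
      exact ((ENNReal.toReal_eq_zero_iff _).1 h2).resolve_right (measure_ne_top _ _)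
    rw [hDdef]
    exact measure_iUnion_null fun N => hUle N
  have hincl : limsup A atTop ⊆ limsup B atTop ∪ D := by
    intro ω hω
    by_cases hD : ω ∈ D
    · exact Or.inr hD
    by_cases hB : ω ∈ limsup B atTop
    · exact Or.inl hB
    exfalso
    rw [mem_limsup_iff_frequently_mem, Filter.frequently_atTop] at hB hω
    push_neg at hB
    obtain ⟨N, hN⟩ := hB
    have hnotD : ∃ n, N ≤ n ∧ ∀ k < m, ω ∉ A (n + k) := by
      rw [hDdef] at hD
      simp only [Set.mem_iUnion, Set.mem_iInter, not_exists, not_forall] at hD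
      obtain ⟨n, hn1, hn2⟩ := hD N
      refine ⟨n, hn1, fun k hk hmem => hn2 ?_⟩
      rw [hUdef]
      exact Set.mem_biUnion (Finset.mem_range.2 hk) hmem
    obtain ⟨n, hnN, hnk⟩ := hnotD
    obtain ⟨j, hj, hjmem⟩ := hω n
    classical
    have hex : ∃ d, ω ∈ A (n + d) := ⟨j - n, by rwa [Nat.add_sub_cancel' hj]⟩
    set d₀ := Nat.find hex with hd₀
    have hd₀mem : ω ∈ A (n + d₀) := Nat.find_spec hex
    have hd₀min : ∀ d < d₀, ω ∉ A (n + d) := fun d hd => Nat.find_min hex hd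
    have hd₀m : m ≤ d₀ := by
      by_contra h
      push_neg at h
      exact hnk d₀ h hd₀mem
    have hmemB : ω ∈ B (n + (d₀ - m)) := by
      rw [hBdef]
      constructor
      · simp only [Set.mem_iInter, Set.mem_compl_iff]
        intro k hk
        rw [Finset.mem_range] at hk
        have he : n + (d₀ - m) + k = n + (d₀ - m + k) := by ring
        rw [he]
        exact hd₀min _ (by omega)
      · have he : n + (d₀ - m) + m = n + d₀ := by omega
        rw [he]
        exact hd₀mem
    exact hN (n + (d₀ - m)) (le_trans hnN (Nat.le_add_right _ _)) hmemB
  exact measure_mono_null hincl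
    (le_antisymm (le_trans (measure_union_le _ _) (by rw [hB0, hD0]; simp)) zero_le)

theorem stmt_1 {Ω : Type*} (𝓕 : MeasurableSpace Ω) {mΩ : MeasurableSpace Ω} (μ : Measure Ω)
    [IsProbabilityMeasure μ] (h𝓕 : 𝓕 ≤ mΩ)
    (A : ℕ → Set Ω) (hA : ∀ n, MeasurableSet (A n)) (m : ℕ)
    (htend : ∀ᵐ ω ∂μ, Tendsto (fun n => cprob μ 𝓕 (A n) ω) atTop (nhds 0))
    (hsum : ∀ᵐ ω ∂μ, Summable fun n =>
      cprob μ 𝓕 ((⋂ k ∈ Finset.range m, (A (n + k))ᶜ) ∩ A (n + m)) ω) :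
    cprob μ 𝓕 (limsup A atTop) =ᵐ[μ] 0 := by
  have hA' : ∀ n, MeasurableSet[mΩ] (A n) := fun n => hA n
  have hnull : μ (limsup A atTop) = 0 := main_null 𝓕 μ h𝓕 A hA' m htend hsum
  have hind : (limsup A atTop).indicator (fun _ => (1:ℝ)) =ᵐ[μ] 0 := by
    have hae : ∀ᵐ ω ∂μ, ω ∉ limsup A atTop := by
      rw [ae_iff]
      simpa using hnull
    filter_upwards [hae] with ω hω
    simp [Set.indicator_of_notMem hω]
  calc cprob μ 𝓕 (limsup A atTop) =ᵐ[μ] μ[(0 : Ω → ℝ) | 𝓕] := condExp_congr_ae hind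
    _ = 0 := condExp_zero
end

section
/- Let {Aₙ}, ℱ, αₙ be as in the conditional power-coefficient setup with A*ₙ = ⋂_{k≥n} A_kᶜ. Then for all n ≥ 1, P(A*ₙ | ℱ) ≤ exp(−∑_{i=n}^∞ αᵢ P(Aᵢ | ℱ)) · (1 − P(limsup Aₙ | ℱ)) almost surely. -/
open MeasureTheory Filter

lemma indicator_one_integrable {Ω : Type*} {mΩ : MeasurableSpace Ω} (μ : MeasureTheory.Measure Ω)
    [MeasureTheory.IsFiniteMeasure μ] {S : Set Ω} (hS : MeasurableSet S) :
    MeasureTheory.Integrable (S.indicator fun _ => (1:ℝ)) μ :=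
  (MeasureTheory.integrable_const 1).indicator hS

lemma rpow_aux {p a : ℝ} (hp0 : 0 ≤ p) (hp1 : p ≤ 1) (ha : 0 ≤ a) :
    (1 - p) ^ a ≤ Real.exp (-(a * p)) := by
  rcases lt_or_eq_of_le hp1 with h1 | h1
  · have h : (0:ℝ) < 1 - p := by linarith
    rw [Real.rpow_def_of_pos h]
    apply Real.exp_le_exp.2
    have hl : Real.log (1 - p) ≤ -p := by
      have := Real.log_le_sub_one_of_pos h
      linarith
    nlinarith [mul_le_mul_of_nonneg_right hl ha]
  · subst h1
    rcases eq_or_lt_of_le ha with ha0 | ha0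
    · rw [← ha0, Real.rpow_zero]
      simp
    · rw [show (1:ℝ) - 1 = 0 by ring, Real.zero_rpow (ne_of_gt ha0)]
      positivity

open Classical in
theorem stmt_7 {Ω : Type*} (𝓕 : MeasurableSpace Ω) {mΩ : MeasurableSpace Ω} (μ : Measure Ω)
    [IsProbabilityMeasure μ] (h𝓕 : 𝓕 ≤ mΩ)
    (A : ℕ → Set Ω) (hA : ∀ n, MeasurableSet (A n))
    (α : ℕ → ℝ) (hα : ∀ n, 0 ≤ α n)
    (hpow : ∀ n, cprob μ 𝓕 ((A n)ᶜ ∩ ⋂ k, (A (n + 1 + k))ᶜ) =ᵐ[μ]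
      fun ω => (cprob μ 𝓕 (A n)ᶜ ω) ^ (α n) *
        cprob μ 𝓕 (⋂ k, (A (n + 1 + k))ᶜ) ω)
    (n : ℕ) :
    ∀ᵐ ω ∂μ, cprob μ 𝓕 (⋂ k, (A (n + k))ᶜ) ω ≤
      (if Summable (fun i => α (n + i) * cprob μ 𝓕 (A (n + i)) ω) then
        Real.exp (-(∑' i, α (n + i) * cprob μ 𝓕 (A (n + i)) ω)) else 0) *
      (1 - cprob μ 𝓕 (limsup A atTop) ω) := by
  have hA' : ∀ j, MeasurableSet[mΩ] (A j) := fun j => hA j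
  have hint := fun (S : Set Ω) (hS : MeasurableSet[mΩ] S) => indicator_one_integrable μ hS
  have hnn : ∀ S : Set Ω, ∀ᵐ ω ∂μ, 0 ≤ cprob μ 𝓕 S ω := by
    intro S
    have : (0:Ω → ℝ) ≤ᵐ[μ] cprob μ 𝓕 S :=
      condExp_nonneg (Eventually.of_forall fun ω =>
        Set.indicator_nonneg (fun _ _ => zero_le_one) ω)
    filter_upwards [this] with ω h using h
  have hle1 : ∀ S : Set Ω, MeasurableSet[mΩ] S → ∀ᵐ ω ∂μ, cprob μ 𝓕 S ω ≤ 1 := by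
    intro S hS
    have h1 : cprob μ 𝓕 S ≤ᵐ[μ] μ[(fun _ => (1:ℝ)) | 𝓕] :=
      condExp_mono (hint S hS) (integrable_const 1)
        (Eventually.of_forall (Set.indicator_le' (fun _ _ => le_refl 1)
          (fun _ _ => zero_le_one)))
    filter_upwards [h1] with ω ha
    calc cprob μ 𝓕 S ω ≤ (μ[(fun _ => (1:ℝ)) | 𝓕]) ω := ha
    _ = 1 := by rw [condExp_const h𝓕 (1:ℝ) (μ := μ)]
  have hmono : ∀ S T : Set Ω, MeasurableSet[mΩ] S → MeasurableSet[mΩ] T → S ⊆ T →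
      ∀ᵐ ω ∂μ, cprob μ 𝓕 S ω ≤ cprob μ 𝓕 T ω := by
    intro S T hS hT hST
    have : cprob μ 𝓕 S ≤ᵐ[μ] cprob μ 𝓕 T :=
      condExp_mono (hint S hS) (hint T hT)
        (Eventually.of_forall (Set.indicator_le_indicator_of_subset hST
          (fun _ => zero_le_one)))
    filter_upwards [this] with ω h using h
  have hcompl : ∀ S : Set Ω, MeasurableSet[mΩ] S →
      ∀ᵐ ω ∂μ, cprob μ 𝓕 Sᶜ ω = 1 - cprob μ 𝓕 S ω := by
    intro S hS
    have heq : Sᶜ.indicator (fun _ => (1:ℝ)) =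
        (fun _ => (1:ℝ)) - S.indicator (fun _ => 1) := by
      funext ω
      by_cases h : ω ∈ S <;> simp [Set.indicator_apply, h]
    have h2 := condExp_sub (m := 𝓕) (integrable_const (1:ℝ)) (hint S hS) (μ := μ)
    unfold cprob
    rw [heq]
    filter_upwards [h2] with ω ha
    rw [ha, Pi.sub_apply, condExp_const h𝓕 (1:ℝ) (μ := μ)]
  have hLmeas : MeasurableSet[mΩ] (limsup A atTop) := by
    rw [limsup_eq_iInf_iSup_of_nat]
    simp only [Set.iInf_eq_iInter, Set.iSup_eq_iUnion]
    exact MeasurableSet.iInter fun m =>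
      MeasurableSet.iUnion fun i => MeasurableSet.iUnion fun _ => hA' i
  have hsub : ∀ j : ℕ, (⋂ k, (A (j + k))ᶜ) ⊆ (limsup A atTop)ᶜ := by
    intro j ω hω hmem
    rw [limsup_eq_iInf_iSup_of_nat] at hmem
    simp only [Set.iInf_eq_iInter, Set.iSup_eq_iUnion, Set.mem_iInter,
      Set.mem_iUnion] at hmem
    obtain ⟨i, hij, hi⟩ := hmem j
    have h := Set.mem_iInter.1 hω (i - j)
    rw [Nat.add_sub_cancel' hij] at h
    exact h hi
  have hAstar : ∀ j : ℕ, (⋂ k, (A (j + k))ᶜ) = (A j)ᶜ ∩ ⋂ k, (A (j + 1 + k))ᶜ := by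
    intro j
    ext ω
    simp only [Set.mem_iInter, Set.mem_inter_iff, Set.mem_compl_iff]
    constructor
    · intro h
      refine ⟨by simpa using h 0, fun k => ?_⟩
      have e : j + 1 + k = j + (k + 1) := by omega
      rw [e]; exact h (k + 1)
    · rintro ⟨h0, h⟩ k
      cases k with
      | zero => simpa using h0
      | succ k =>
        have e : j + (k + 1) = j + 1 + k := by omega
        rw [e]; exact h k
  have hrec : ∀ᵐ ω ∂μ, ∀ j, cprob μ 𝓕 (⋂ k, (A (j + k))ᶜ) ω =
      (1 - cprob μ 𝓕 (A j) ω) ^ (α j) * cprob μ 𝓕 (⋂ k, (A (j + 1 + k))ᶜ) ω := by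
    rw [ae_all_iff]
    intro j
    filter_upwards [hpow j, hcompl (A j) (hA' j)] with ω h1 h2
    rw [hAstar j, h1, h2]
  have hbound : ∀ᵐ ω ∂μ, ∀ j, cprob μ 𝓕 (⋂ k, (A (j + k))ᶜ) ω ≤
      1 - cprob μ 𝓕 (limsup A atTop) ω := by
    rw [ae_all_iff]
    intro j
    filter_upwards [hmono _ _ (MeasurableSet.iInter fun k => (hA' _).compl)
      hLmeas.compl (hsub j), hcompl _ hLmeas] with ω h1 h2
    rw [← h2]; exact h1
  have hq0 : ∀ᵐ ω ∂μ, ∀ j, 0 ≤ cprob μ 𝓕 (⋂ k, (A (j + k))ᶜ) ω :=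
    ae_all_iff.2 fun j => hnn _
  have hp01 : ∀ᵐ ω ∂μ, ∀ j, 0 ≤ cprob μ 𝓕 (A j) ω ∧ cprob μ 𝓕 (A j) ω ≤ 1 := by
    rw [ae_all_iff]
    intro j
    filter_upwards [hnn (A j), hle1 (A j) (hA' j)] with ω h1 h2 using ⟨h1, h2⟩
  filter_upwards [hrec, hbound, hq0, hp01] with ω Hrec Hb Hq0 Hp
  have key : ∀ m j, cprob μ 𝓕 (⋂ k, (A (j + k))ᶜ) ω ≤
      Real.exp (-(∑ i ∈ Finset.range m, α (j + i) * cprob μ 𝓕 (A (j + i)) ω)) *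
      (1 - cprob μ 𝓕 (limsup A atTop) ω) := by
    intro m
    induction m with
    | zero => intro j; simpa using Hb j
    | succ m ih =>
      intro j
      rw [Hrec j]
      have h1 : (1 - cprob μ 𝓕 (A j) ω) ^ (α j) ≤
          Real.exp (-(α j * cprob μ 𝓕 (A j) ω)) :=
        rpow_aux (Hp j).1 (Hp j).2 (hα j)
      have hsum : (∑ i ∈ Finset.range (m+1), α (j + i) * cprob μ 𝓕 (A (j + i)) ω)
          = α j * cprob μ 𝓕 (A j) ω +
            ∑ i ∈ Finset.range m, α (j + 1 + i) * cprob μ 𝓕 (A (j + 1 + i)) ω := by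
        rw [Finset.sum_range_succ', Nat.add_zero, add_comm]
        refine congrArg₂ _ rfl (Finset.sum_congr rfl fun i _ => ?_)
        have e : j + (i + 1) = j + 1 + i := by omega
        rw [e]
      calc (1 - cprob μ 𝓕 (A j) ω) ^ (α j) * cprob μ 𝓕 (⋂ k, (A (j + 1 + k))ᶜ) ω
          ≤ Real.exp (-(α j * cprob μ 𝓕 (A j) ω)) *
            (Real.exp (-(∑ i ∈ Finset.range m,
              α (j + 1 + i) * cprob μ 𝓕 (A (j + 1 + i)) ω)) *
              (1 - cprob μ 𝓕 (limsup A atTop) ω)) :=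
            mul_le_mul h1 (ih (j + 1)) (Hq0 (j + 1)) (Real.exp_pos _).le
      _ = Real.exp (-(∑ i ∈ Finset.range (m+1), α (j + i) * cprob μ 𝓕 (A (j + i)) ω)) *
            (1 - cprob μ 𝓕 (limsup A atTop) ω) := by
          rw [hsum, neg_add, Real.exp_add, mul_assoc]
  by_cases hS : Summable (fun i => α (n + i) * cprob μ 𝓕 (A (n + i)) ω)
  · rw [if_pos hS]
    have hT : Tendsto (fun m => Real.exp
        (-(∑ i ∈ Finset.range m, α (n + i) * cprob μ 𝓕 (A (n + i)) ω)) *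
        (1 - cprob μ 𝓕 (limsup A atTop) ω)) atTop
        (nhds (Real.exp (-(∑' i, α (n + i) * cprob μ 𝓕 (A (n + i)) ω)) *
          (1 - cprob μ 𝓕 (limsup A atTop) ω))) :=
      ((Real.continuous_exp.tendsto _).comp hS.hasSum.tendsto_sum_nat.neg).mul_const _
    exact ge_of_tendsto hT (Eventually.of_forall fun m => key m n)
  · rw [if_neg hS, zero_mul]
    have hg : ∀ i, 0 ≤ α (n + i) * cprob μ 𝓕 (A (n + i)) ω :=
      fun i => mul_nonneg (hα _) (Hp _).1
    have ht := (not_summable_iff_tendsto_nat_atTop_of_nonneg hg).1 hS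
    have h2 : Tendsto (fun m => Real.exp
        (-(∑ i ∈ Finset.range m, α (n + i) * cprob μ 𝓕 (A (n + i)) ω)) *
        (1 - cprob μ 𝓕 (limsup A atTop) ω)) atTop (nhds 0) := by
      have := (Real.tendsto_exp_atBot.comp
        (tendsto_neg_atTop_atBot.comp ht)).mul_const
        (1 - cprob μ 𝓕 (limsup A atTop) ω)
      simpa [Function.comp] using this
    exact ge_of_tendsto h2 (Eventually.of_forall fun m => key m n)
end

section
/- Let {Aₙ} be a sequence of events that is conditionally independent given a sub-σ-algebra ℱ. Suppose there is a function ψ : ℕ → ℕ such that for all N ≥ 1, ∑_{i=1}^{ψ(N)} P(Aᵢ | ℱ) ≥ N almost surely. Then for all n ≥ 1 and N ≥ 1, P(⋃_{i=n}^{ψ(n+N−1)} Aᵢ | ℱ) ≥ 1 − e^{−N} almost surely. -/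
open MeasureTheory Filter

lemma indProd {Ω : Type*} (A : ℕ → Set Ω) (T : Finset ℕ) (ω : Ω) :
    (⋂ i ∈ T, A i).indicator (fun _ => (1:ℝ)) ω
      = ∏ i ∈ T, (A i).indicator (fun _ => (1:ℝ)) ω := by
  by_cases h : ω ∈ ⋂ i ∈ T, A i
  · rw [Set.indicator_of_mem h]
    simp only [Set.mem_iInter] at h
    exact (Finset.prod_eq_one fun i hi => Set.indicator_of_mem (h i hi) _).symm
  · rw [Set.indicator_of_notMem h]
    simp only [Set.mem_iInter, not_forall] at h
    obtain ⟨i, hi, hωi⟩ := h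
    exact (Finset.prod_eq_zero hi (Set.indicator_of_notMem hωi _)).symm

lemma indComplProd {Ω : Type*} (A : ℕ → Set Ω) (S : Finset ℕ) (ω : Ω) :
    (⋂ i ∈ S, (A i)ᶜ).indicator (fun _ => (1:ℝ)) ω
      = ∏ i ∈ S, (1 - (A i).indicator (fun _ => (1:ℝ)) ω) := by
  rw [indProd (fun i => (A i)ᶜ) S ω]
  refine Finset.prod_congr rfl fun i _ => ?_
  by_cases h : ω ∈ A i
  · rw [Set.indicator_of_notMem (by simpa using h), Set.indicator_of_mem h]; ring
  · rw [Set.indicator_of_mem (by simpa using h), Set.indicator_of_notMem h]; ring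

theorem stmt_9 {Ω : Type*} (𝓕 : MeasurableSpace Ω) {mΩ : MeasurableSpace Ω} (μ : Measure Ω)
    [IsProbabilityMeasure μ] (h𝓕 : 𝓕 ≤ mΩ)
    (A : ℕ → Set Ω) (hA : ∀ n, MeasurableSet (A n))
    (hCI : ∀ S : Finset ℕ, cprob μ 𝓕 (⋂ i ∈ S, A i) =ᵐ[μ]
      fun ω => ∏ i ∈ S, cprob μ 𝓕 (A i) ω)
    (ψ : ℕ → ℕ)
    (hψ : ∀ N : ℕ, 1 ≤ N → ∀ᵐ ω ∂μ,
      (N : ℝ) ≤ ∑ i ∈ Finset.Icc 1 (ψ N), cprob μ 𝓕 (A i) ω) :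
    ∀ n N : ℕ, 1 ≤ n → 1 ≤ N → ∀ᵐ ω ∂μ,
      1 - Real.exp (-(N : ℝ)) ≤
        cprob μ 𝓕 (⋃ i ∈ Finset.Icc n (ψ (n + N - 1)), A i) ω := by
  set p : ℕ → Ω → ℝ := fun i => cprob μ 𝓕 (A i) with hp
  have hint : ∀ (s : Set Ω), MeasurableSet s →
      Integrable (s.indicator (fun _ => (1:ℝ))) μ :=
    fun s hs => Integrable.indicator (μ := μ) (f := fun _ => (1:ℝ)) (s := s) (integrable_const 1) hs
  have hIcap : ∀ T : Finset ℕ, MeasurableSet (⋂ i ∈ T, A i) :=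
    fun T => MeasurableSet.biInter T.countable_toSet (fun i _ => hA i)
  -- complements of A i are conditionally multiplicative
  have hcompl : ∀ S : Finset ℕ, cprob μ 𝓕 (⋂ i ∈ S, (A i)ᶜ) =ᵐ[μ]
      fun ω => ∏ i ∈ S, (1 - p i ω) := by
    intro S
    have hfun : (⋂ i ∈ S, (A i)ᶜ).indicator (fun _ => (1:ℝ)) =
        ∑ T ∈ S.powerset, fun ω =>
          ((-1:ℝ))^T.card * (⋂ i ∈ T, A i).indicator (fun _ => (1:ℝ)) ω := by
      funext ω
      rw [indComplProd]
      have h1 : ∀ i ∈ S, (1 - (A i).indicator (fun _ => (1:ℝ)) ω)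
          = (-( (A i).indicator (fun _ => (1:ℝ)) ω) + 1) := fun i _ => by ring
      rw [Finset.prod_congr rfl h1,
        Finset.prod_add (fun i => -((A i).indicator (fun _ => (1:ℝ)) ω)) (fun _ => (1:ℝ)) S]
      simp only [Finset.sum_apply, Finset.prod_const_one, mul_one]
      refine Finset.sum_congr rfl fun T hT => ?_
      rw [indProd]
      rw [show (fun i => -((A i).indicator (fun _ => (1:ℝ)) ω))
          = fun i => (-1 : ℝ) * (A i).indicator (fun _ => (1:ℝ)) ω from funext fun i => by ring,
        Finset.prod_mul_distrib, Finset.prod_const]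
    have hintT : ∀ T ∈ S.powerset, Integrable
        (fun ω => ((-1:ℝ))^T.card * (⋂ i ∈ T, A i).indicator (fun _ => (1:ℝ)) ω) μ :=
      fun T _ => (hint _ (hIcap T)).const_mul _
    have step1 := condExp_finset_sum (m := 𝓕) hintT
    have step2 : ∀ᵐ ω ∂μ, ∀ T ∈ S.powerset,
        (μ[fun ω' => ((-1:ℝ))^T.card * (⋂ i ∈ T, A i).indicator (fun _ => (1:ℝ)) ω' | 𝓕]) ω
          = ((-1:ℝ))^T.card * ∏ i ∈ T, p i ω := by
      rw [Filter.eventually_all_finset]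
      intro T _
      have h2 := condExp_smul (μ := μ) (m := 𝓕) (((-1:ℝ))^T.card)
        ((⋂ i ∈ T, A i).indicator (fun _ => (1:ℝ)))
      filter_upwards [h2, hCI T] with ω h2ω h3ω
      have : (fun ω' => ((-1:ℝ))^T.card * (⋂ i ∈ T, A i).indicator (fun _ => (1:ℝ)) ω')
          = ((-1:ℝ))^T.card • ((⋂ i ∈ T, A i).indicator (fun _ => (1:ℝ))) := rfl
      rw [this, h2ω]
      simp only [Pi.smul_apply, smul_eq_mul]
      rw [show (μ[(⋂ i ∈ T, A i).indicator (fun _ => (1:ℝ))|𝓕]) ω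
          = cprob μ 𝓕 (⋂ i ∈ T, A i) ω from rfl, h3ω]
    rw [cprob, hfun]
    filter_upwards [step1, step2] with ω h1ω h2ω
    rw [h1ω]
    simp only [Finset.sum_apply]
    rw [Finset.sum_congr rfl h2ω]
    have h3 : ∀ i ∈ S, (1 - p i ω) = (-(p i ω) + 1) := fun i _ => by ring
    rw [Finset.prod_congr rfl h3,
      Finset.prod_add (fun i => -(p i ω)) (fun _ => (1:ℝ)) S]
    simp only [Finset.prod_const_one, mul_one]
    refine (Finset.sum_congr rfl fun T hT => ?_).symm
    rw [show (fun i => -(p i ω)) = fun i => (-1:ℝ) * p i ω from funext fun i => by ring,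
      Finset.prod_mul_distrib, Finset.prod_const]
  -- union formula
  have hunion : ∀ S : Finset ℕ, cprob μ 𝓕 (⋃ i ∈ S, A i) =ᵐ[μ]
      fun ω => 1 - ∏ i ∈ S, (1 - p i ω) := by
    intro S
    have hfun : (⋃ i ∈ S, A i).indicator (fun _ => (1:ℝ))
        = (fun _ => (1:ℝ)) - (⋂ i ∈ S, (A i)ᶜ).indicator (fun _ => (1:ℝ)) := by
      funext ω
      have hc : (⋂ i ∈ S, (A i)ᶜ) = (⋃ i ∈ S, A i)ᶜ := by
        simp [Set.compl_iUnion]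
      by_cases h : ω ∈ ⋃ i ∈ S, A i
      · have h2 : ω ∉ ⋂ i ∈ S, (A i)ᶜ := by rw [hc]; simpa using h
        simp [Set.indicator_of_mem h, Set.indicator_of_notMem h2]
      · have h2 : ω ∈ ⋂ i ∈ S, (A i)ᶜ := by rw [hc]; exact h
        simp [Set.indicator_of_notMem h, Set.indicator_of_mem h2]
    rw [cprob, hfun]
    have hmeas : MeasurableSet (⋂ i ∈ S, (A i)ᶜ) :=
      MeasurableSet.biInter S.countable_toSet (fun i _ => (hA i).compl)
    have hsub := condExp_sub (m := 𝓕) (integrable_const (1:ℝ)) (hint _ hmeas)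
    filter_upwards [hsub, hcompl S] with ω h1ω h2ω
    rw [h1ω]
    simp only [Pi.sub_apply]
    rw [condExp_const h𝓕 (1:ℝ)]
    rw [show (μ[(⋂ i ∈ S, (A i)ᶜ).indicator (fun _ => (1:ℝ))|𝓕]) ω
        = cprob μ 𝓕 (⋂ i ∈ S, (A i)ᶜ) ω from rfl, h2ω]
  -- bounds on p
  have hp0 : ∀ᵐ ω ∂μ, ∀ i, 0 ≤ p i ω :=
    ae_all_iff.2 fun i => condExp_nonneg
      (ae_of_all _ fun ω => Set.indicator_nonneg (fun _ _ => zero_le_one) ω)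
  have hp1 : ∀ᵐ ω ∂μ, ∀ i, p i ω ≤ 1 := by
    refine ae_all_iff.2 fun i => ?_
    have := condExp_mono (m := 𝓕) (hint _ (hA i)) (integrable_const (1:ℝ))
      (ae_of_all _ fun ω => Set.indicator_le' (fun _ _ => le_refl 1)
        (fun _ _ => zero_le_one) ω)
    rwa [condExp_const h𝓕 (1:ℝ)] at this
  intro n N hn hN
  set K := n + N - 1 with hK
  have hK1 : 1 ≤ K := by omega
  set m := ψ K with hm
  -- show n ≤ m, deterministically
  have hnm : n ≤ m := by
    have hne : (ae μ).NeBot := ae_neBot.2 (IsProbabilityMeasure.ne_zero μ)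
    obtain ⟨ω, hω1, hω2⟩ := ((hψ K hK1).and hp1).exists
    have hle : (K : ℝ) ≤ ((Finset.Icc 1 m).card : ℝ) := by
      have := Finset.sum_le_card_nsmul (Finset.Icc 1 m) (fun i => p i ω) 1
        (fun i _ => hω2 i)
      simpa using hω1.trans this
    rw [Nat.card_Icc] at hle
    have hKm : K ≤ m + 1 - 1 := by exact_mod_cast hle
    omega
  filter_upwards [hunion (Finset.Icc n m), hψ K hK1, hp0, hp1] with ω heq hsum h0 h1
  rw [heq]
  have hsumN : (N : ℝ) ≤ ∑ i ∈ Finset.Icc n m, p i ω := by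
    have hsplit : ∑ i ∈ Finset.Ioc 0 (n-1), p i ω + ∑ i ∈ Finset.Ioc (n-1) m, p i ω
        = ∑ i ∈ Finset.Ioc 0 m, p i ω :=
      Finset.sum_Ioc_consecutive _ (Nat.zero_le _) (by omega)
    have e1 : Finset.Icc 1 m = Finset.Ioc 0 m := rfl
    have e2 : Finset.Icc 1 (n-1) = Finset.Ioc 0 (n-1) := rfl
    have e3 : Finset.Icc n m = Finset.Ioc (n-1) m := by
      rw [← Finset.Icc_add_one_left_eq_Ioc]; congr 1; omega
    have hlow : ∑ i ∈ Finset.Icc 1 (n-1), p i ω ≤ ((n-1 : ℕ) : ℝ) := by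
      have := Finset.sum_le_card_nsmul (Finset.Icc 1 (n-1)) (fun i => p i ω) 1
        (fun i _ => h1 i)
      simpa [Nat.card_Icc] using this
    have hKcast : ((K : ℕ) : ℝ) = (n : ℝ) + N - 1 := by
      rw [hK, Nat.cast_sub (by omega)]; push_cast; ring
    have hncast : (((n-1 : ℕ)) : ℝ) = (n : ℝ) - 1 := by
      rw [Nat.cast_sub (by omega)]; push_cast; ring
    rw [e3]
    rw [e1] at hsum
    rw [e2] at hlow
    rw [hKcast] at hsum
    rw [hncast] at hlow
    linarith [hsplit]
  have hprod : ∏ i ∈ Finset.Icc n m, (1 - p i ω) ≤ Real.exp (-(N : ℝ)) := by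
    calc ∏ i ∈ Finset.Icc n m, (1 - p i ω)
        ≤ ∏ i ∈ Finset.Icc n m, Real.exp (-(p i ω)) := by
          refine Finset.prod_le_prod (fun i _ => by linarith [h1 i]) (fun i _ => ?_)
          linarith [Real.add_one_le_exp (-(p i ω))]
      _ = Real.exp (∑ i ∈ Finset.Icc n m, -(p i ω)) := (Real.exp_sum _ _).symm
      _ = Real.exp (-(∑ i ∈ Finset.Icc n m, p i ω)) := by rw [Finset.sum_neg_distrib]
      _ ≤ Real.exp (-(N : ℝ)) := Real.exp_le_exp.2 (by linarith)
  linarith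
end

section
/- (Conditional Chung–Erdős inequality) Let A₁, …, Aₙ be events and ℱ a sub-σ-algebra. Then P(⋃_{k=1}^{n} A_k | ℱ) ≥ (∑_{k=1}^{n} P(A_k | ℱ))² / (∑_{i,k=1}^{n} P(Aᵢ ∩ A_k | ℱ)) almost surely (with the convention 0/0 = 0). -/
open MeasureTheory Filter

/-- Pointwise quadratic lemma: if `t² b - 2 t a + c ≥ 0` for all rational `t`,
with `b, c ≥ 0`, then `a² / b ≤ c` (with the `0/0 = 0` convention). -/
lemma aux_quad (a b c : ℝ) (hb : 0 ≤ b) (hc : 0 ≤ c)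
    (h : ∀ t : ℚ, 0 ≤ (t : ℝ) ^ 2 * b - 2 * t * a + c) : a ^ 2 / b ≤ c := by
  have hreal : ∀ x : ℝ, 0 ≤ x ^ 2 * b - 2 * x * a + c := by
    have hcl : IsClosed {x : ℝ | 0 ≤ x ^ 2 * b - 2 * x * a + c} :=
      isClosed_le continuous_const (by fun_prop)
    intro x
    have hsub : Set.range ((↑) : ℚ → ℝ) ⊆ {x : ℝ | 0 ≤ x ^ 2 * b - 2 * x * a + c} := by
      rintro _ ⟨q, rfl⟩; exact h q
    have : closure (Set.range ((↑) : ℚ → ℝ)) ⊆ {x : ℝ | 0 ≤ x ^ 2 * b - 2 * x * a + c} :=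
      hcl.closure_subset_iff.mpr hsub
    have hd : Dense (Set.range ((↑) : ℚ → ℝ)) := Rat.denseRange_cast
    exact this (by rw [hd.closure_eq]; trivial)
  rcases eq_or_lt_of_le hb with hb0 | hb0
  · rw [← hb0, div_zero]; exact hc
  · have h1 := hreal (a / b)
    have e1 : (a / b) ^ 2 * b = a ^ 2 / b := by field_simp
    have e2 : 2 * (a / b) * a = 2 * (a ^ 2 / b) := by field_simp
    rw [e1, e2] at h1
    linarith

lemma aux_int {Ω : Type*} {mΩ : MeasurableSpace Ω} (μ : Measure Ω)
    [IsFiniteMeasure μ] {B : Set Ω} (hB : MeasurableSet B) :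
    Integrable (B.indicator (fun _ => (1 : ℝ))) μ :=
  (integrable_const (1 : ℝ)).indicator hB

theorem stmt_12 {Ω : Type*} (𝓕 : MeasurableSpace Ω) {mΩ : MeasurableSpace Ω} (μ : Measure Ω)
    [IsProbabilityMeasure μ] (h𝓕 : 𝓕 ≤ mΩ)
    (A : ℕ → Set Ω) (hA : ∀ n, MeasurableSet (A n)) (n : ℕ) :
    ∀ᵐ ω ∂μ,
      (∑ k ∈ Finset.Icc 1 n, cprob μ 𝓕 (A k) ω) ^ 2 /
          (∑ i ∈ Finset.Icc 1 n, ∑ k ∈ Finset.Icc 1 n,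
            cprob μ 𝓕 (A i ∩ A k) ω) ≤
        cprob μ 𝓕 (⋃ k ∈ Finset.Icc 1 n, A k) ω := by
  classical
  have hA' : ∀ k, MeasurableSet[mΩ] (A k) := fun k => hA k
  set s := Finset.Icc 1 n with hs
  set U : Set Ω := ⋃ k ∈ s, A k with hU
  set η : Ω → ℝ := fun ω => ∑ k ∈ s, (A k).indicator (fun _ => (1 : ℝ)) ω with hη
  have hind : ∀ B : Set Ω, MeasurableSet[mΩ] B →
      Integrable (B.indicator (fun _ => (1 : ℝ))) μ := fun B hB => aux_int μ hB
  have hηint : Integrable η μ := integrable_finset_sum _ fun k _ => hind _ (hA' k)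
  -- η off U is 0
  have hηU : ∀ ω, ω ∉ U → η ω = 0 := by
    intro ω hω
    refine Finset.sum_eq_zero fun k hk => ?_
    refine Set.indicator_of_notMem (fun hx => hω ?_) _
    exact Set.mem_biUnion hk hx
  -- η² as a double sum of indicators
  have hsq : (fun ω => η ω ^ 2) =
      fun ω => ∑ i ∈ s, ∑ k ∈ s, ((A i ∩ A k).indicator (fun _ => (1 : ℝ))) ω := by
    funext ω
    rw [sq, hη, Finset.sum_mul_sum]
    refine Finset.sum_congr rfl fun i _ => Finset.sum_congr rfl fun k _ => ?_
    by_cases hi : ω ∈ A i <;> by_cases hk : ω ∈ A k <;>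
      simp [Set.indicator_apply, hi, hk]
  have hη2int : Integrable (fun ω => η ω ^ 2) μ := by
    rw [hsq]
    exact integrable_finset_sum _ fun i _ =>
      integrable_finset_sum _ fun k _ => hind _ ((hA' i).inter (hA' k))
  -- identify the conditional expectations
  have ha : μ[η|𝓕] =ᵐ[μ] fun ω => ∑ k ∈ s, cprob μ 𝓕 (A k) ω := by
    have h1 : μ[∑ k ∈ s, (A k).indicator (fun _ => (1 : ℝ))|𝓕] =ᵐ[μ]
        ∑ k ∈ s, μ[(A k).indicator (fun _ => (1 : ℝ))|𝓕] :=
      condExp_finsetSum (fun k _ => hind _ (hA' k)) _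
    have h2 : η = ∑ k ∈ s, (A k).indicator (fun _ => (1 : ℝ)) := by
      funext ω; simp [hη]
    rw [h2]
    refine h1.trans (Eventually.of_forall fun ω => ?_)
    simp [cprob]
  have hb : μ[fun ω => η ω ^ 2|𝓕] =ᵐ[μ]
      fun ω => ∑ i ∈ s, ∑ k ∈ s, cprob μ 𝓕 (A i ∩ A k) ω := by
    have h2 : (fun ω => η ω ^ 2) =
        ∑ p ∈ s ×ˢ s, (A p.1 ∩ A p.2).indicator (fun _ => (1 : ℝ)) := by
      rw [hsq]; funext ω
      rw [Finset.sum_apply]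
      rw [Finset.sum_product]
    rw [h2]
    have h1 : μ[∑ p ∈ s ×ˢ s, (A p.1 ∩ A p.2).indicator (fun _ => (1 : ℝ))|𝓕] =ᵐ[μ]
        ∑ p ∈ s ×ˢ s, μ[(A p.1 ∩ A p.2).indicator (fun _ => (1 : ℝ))|𝓕] :=
      condExp_finsetSum (fun p _ => hind _ ((hA' p.1).inter (hA' p.2))) _
    refine h1.trans (Eventually.of_forall fun ω => ?_)
    rw [Finset.sum_apply]
    rw [Finset.sum_product]
    rfl
  -- quadratic inequality for each rational t
  have hquad : ∀ t : ℚ, ∀ᵐ ω ∂μ,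
      0 ≤ (t : ℝ) ^ 2 * (μ[fun ω => η ω ^ 2|𝓕]) ω - 2 * t * (μ[η|𝓕]) ω +
        (μ[U.indicator (fun _ => (1 : ℝ))|𝓕]) ω := by
    intro t
    have hident : (fun ω => ((t : ℝ) * η ω - U.indicator (fun _ => (1 : ℝ)) ω) ^ 2) =
        (t : ℝ) ^ 2 • (fun ω => η ω ^ 2) + (-(2 * (t : ℝ))) • η +
          U.indicator (fun _ => (1 : ℝ)) := by
      funext ω
      simp only [Pi.add_apply, Pi.smul_apply, smul_eq_mul]
      by_cases h : ω ∈ U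
      · rw [Set.indicator_of_mem h]; ring
      · rw [Set.indicator_of_notMem h, hηU ω h]; ring
    have hnn : 0 ≤ᵐ[μ]
        μ[fun ω => ((t : ℝ) * η ω - U.indicator (fun _ => (1 : ℝ)) ω) ^ 2|𝓕] :=
      condExp_nonneg (Eventually.of_forall fun ω => sq_nonneg _)
    have hlin : μ[(t : ℝ) ^ 2 • (fun ω => η ω ^ 2) + (-(2 * (t : ℝ))) • η +
          U.indicator (fun _ => (1 : ℝ))|𝓕] =ᵐ[μ]
        (t : ℝ) ^ 2 • μ[fun ω => η ω ^ 2|𝓕] + (-(2 * (t : ℝ))) • μ[η|𝓕] +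
          μ[U.indicator (fun _ => (1 : ℝ))|𝓕] := by
      refine (condExp_add ((hη2int.smul _).add (hηint.smul _)) (hind U ?_) _).trans ?_
      · exact MeasurableSet.biUnion s.countable_toSet fun k _ => hA' k
      refine EventuallyEq.add ?_ EventuallyEq.rfl
      refine (condExp_add (hη2int.smul _) (hηint.smul _) _).trans ?_
      exact EventuallyEq.add (condExp_smul _ _ _) (condExp_smul _ _ _)
    rw [hident] at hnn
    filter_upwards [hnn, hlin] with ω h1 h2
    rw [h2] at h1
    simp only [Pi.add_apply, Pi.smul_apply, Pi.zero_apply, smul_eq_mul] at h1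
    linarith
  have hball : ∀ᵐ ω ∂μ, ∀ t : ℚ,
      0 ≤ (t : ℝ) ^ 2 * (μ[fun ω => η ω ^ 2|𝓕]) ω - 2 * t * (μ[η|𝓕]) ω +
        (μ[U.indicator (fun _ => (1 : ℝ))|𝓕]) ω := ae_all_iff.2 hquad
  have hbpos : 0 ≤ᵐ[μ] μ[fun ω => η ω ^ 2|𝓕] :=
    condExp_nonneg (Eventually.of_forall fun ω => sq_nonneg _)
  have hcpos : 0 ≤ᵐ[μ] μ[U.indicator (fun _ => (1 : ℝ))|𝓕] :=
    condExp_nonneg (Eventually.of_forall fun ω =>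
      Set.indicator_nonneg (fun _ _ => zero_le_one) ω)
  filter_upwards [hball, ha, hb, hbpos, hcpos] with ω h1 h2 h3 h4 h5
  have hcU : cprob μ 𝓕 U ω = (μ[U.indicator (fun _ => (1 : ℝ))|𝓕]) ω := rfl
  rw [hcU, ← h2, ← h3]
  exact aux_quad _ _ _ (by simpa using h4) (by simpa using h5) (fun t => h1 t)
end

section
/- (Conditional Kochen–Stone) Let {Aₙ} be events and ℱ a sub-σ-algebra with ∑_{n=1}^{∞} P(Aₙ | ℱ) = ∞ almost surely. Then P(limsup Aₙ | ℱ) ≥ limsup_{n→∞} (∑_{k=1}^{n} P(A_k | ℱ))² / (∑_{i,k=1}^{n} P(Aᵢ ∩ A_k | ℱ)) almost surely. -/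
open MeasureTheory Filter Topology

private lemma quad_aux {a b c : ℝ} (ha : 0 ≤ a)
    (h : ∀ q : ℚ, 0 ≤ a * (q : ℝ) ^ 2 + 2 * b * q + c) : b ^ 2 ≤ a * c := by
  have hR : ∀ x : ℝ, 0 ≤ a * (x * x) + 2 * b * x + c := by
    intro x
    have hcl : IsClosed {x : ℝ | 0 ≤ a * (x * x) + 2 * b * x + c} :=
      isClosed_le continuous_const (by continuity)
    have hsub : Set.range ((↑) : ℚ → ℝ) ⊆ {x : ℝ | 0 ≤ a * (x * x) + 2 * b * x + c} := by
      rintro _ ⟨q, rfl⟩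
      have := h q
      simp only [Set.mem_setOf_eq]
      nlinarith [h q]
    have hx : x ∈ closure (Set.range ((↑) : ℚ → ℝ)) := by
      rw [Rat.denseRange_cast.closure_eq]; trivial
    exact (hcl.closure_subset_iff.2 hsub) hx
  have hd := discrim_le_zero hR
  rw [discrim] at hd
  nlinarith [hd]

private lemma ind_integrable {Ω : Type*} {mΩ : MeasurableSpace Ω} (μ : Measure Ω)
    [IsFiniteMeasure μ] {s : Set Ω} (hs : MeasurableSet s) :
    Integrable (s.indicator fun _ => (1 : ℝ)) μ :=
  (integrable_const 1).indicator hs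

private lemma limsup_measurable {Ω : Type*} {mΩ : MeasurableSpace Ω} {A : ℕ → Set Ω}
    (hA : ∀ n, MeasurableSet (A n)) : MeasurableSet (Filter.limsup A Filter.atTop) :=
  MeasurableSet.measurableSet_limsup hA

private lemma integral_ind {Ω : Type*} {mΩ : MeasurableSpace Ω} (μ : Measure Ω)
    [IsProbabilityMeasure μ] {s : Set Ω} (hs : MeasurableSet s) :
    ∫ ω, s.indicator (fun _ => (1 : ℝ)) ω ∂μ = (μ s).toReal := by
  rw [integral_indicator_const (1 : ℝ) hs, smul_eq_mul, mul_one]; rfl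

private lemma cs_ineq {Ω : Type*} {mΩ : MeasurableSpace Ω} (μ : Measure Ω)
    [IsProbabilityMeasure μ] (𝓕 : MeasurableSpace Ω)
    (A : ℕ → Set Ω) (hA : ∀ n, MeasurableSet[mΩ] (A n)) (U : Set Ω)
    (hU : MeasurableSet[mΩ] U)
    (m n : ℕ) (hAU : ∀ k, m < k → A k ⊆ U) (q : ℚ) :
    ∀ᵐ ω ∂μ, 0 ≤ (q : ℝ) ^ 2 *
        (∑ i ∈ Finset.Ioc m n, ∑ k ∈ Finset.Ioc m n, cprob μ 𝓕 (A i ∩ A k) ω)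
      + 2 * (q : ℝ) * (∑ k ∈ Finset.Ioc m n, cprob μ 𝓕 (A k) ω) + cprob μ 𝓕 U ω := by
  classical
  set ind : Set Ω → Ω → ℝ := fun s => s.indicator fun _ => 1 with hind
  have hint : ∀ s : Set Ω, MeasurableSet[mΩ] s → Integrable (ind s) μ := fun s hs =>
    ind_integrable μ hs
  have hmul : ∀ (s t : Set Ω) (ω : Ω), ind s ω * ind t ω = ind (s ∩ t) ω := by
    intro s t ω
    by_cases hs : ω ∈ s <;> by_cases ht : ω ∈ t <;>
      simp [hind, Set.indicator_apply, hs, ht]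
  set X : Ω → ℝ := fun ω => ∑ k ∈ Finset.Ioc m n, ind (A k) ω with hX
  set F1 : Ω → ℝ := fun ω => ∑ i ∈ Finset.Ioc m n, ∑ k ∈ Finset.Ioc m n, ind (A i ∩ A k) ω
    with hF1
  have hXU : ∀ ω, X ω * ind U ω = X ω := by
    intro ω
    by_cases hω : ω ∈ U
    · simp [hind, Set.indicator_of_mem hω]
    · have hzero : X ω = 0 := Finset.sum_eq_zero fun k hk => by
        have hk' : ω ∉ A k := fun h => hω (hAU k (Finset.mem_Ioc.1 hk).1 h)
        simp [hind, Set.indicator_of_notMem hk']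
      simp [hind, hzero, Set.indicator_of_notMem hω]
  have hphi : (fun ω => ((q : ℝ) * X ω + ind U ω) ^ 2)
      = (q : ℝ) ^ 2 • F1 + ((2 * (q : ℝ)) • X + ind U) := by
    funext ω
    have e1 : X ω * X ω = F1 ω := by
      rw [hX, hF1]
      dsimp only
      rw [Finset.sum_mul_sum]
      exact Finset.sum_congr rfl fun i _ => Finset.sum_congr rfl fun k _ => hmul _ _ ω
    have e2 : ind U ω * ind U ω = ind U ω := by rw [hmul]; simp
    have e3 := hXU ω
    simp only [Pi.add_apply, Pi.smul_apply, smul_eq_mul]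
    linear_combination (q : ℝ) ^ 2 * e1 + 2 * (q : ℝ) * e3 + e2
  have hXint : Integrable X μ := integrable_finset_sum _ fun k _ => hint _ (hA k)
  have hF1int : Integrable F1 μ :=
    integrable_finset_sum _ fun i _ =>
      integrable_finset_sum _ fun k _ => hint _ ((hA i).inter (hA k))
  -- conditional expectation of F1
  have hF1c : μ[F1|𝓕] =ᵐ[μ]
      fun ω => ∑ i ∈ Finset.Ioc m n, ∑ k ∈ Finset.Ioc m n, cprob μ 𝓕 (A i ∩ A k) ω := by
    have hsum : F1 = ∑ i ∈ Finset.Ioc m n, ∑ k ∈ Finset.Ioc m n, ind (A i ∩ A k) := by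
      funext ω; simp [hF1, Finset.sum_apply]
    rw [hsum]
    refine (condExp_finsetSum (fun i _ =>
      integrable_finset_sum' _ fun k _ => hint _ ((hA i).inter (hA k))) 𝓕).trans ?_
    refine (eventuallyEq_sum fun i _ =>
      condExp_finsetSum (fun k _ => hint _ ((hA i).inter (hA k))) 𝓕).trans ?_
    refine Eventually.of_forall fun ω => ?_
    simp [Finset.sum_apply, cprob, hind]
  have hXc : μ[X|𝓕] =ᵐ[μ] fun ω => ∑ k ∈ Finset.Ioc m n, cprob μ 𝓕 (A k) ω := by
    have hsum : X = ∑ k ∈ Finset.Ioc m n, ind (A k) := by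
      funext ω; simp [hX, Finset.sum_apply]
    rw [hsum]
    refine (condExp_finsetSum (fun k _ => hint _ (hA k)) 𝓕).trans ?_
    refine Eventually.of_forall fun ω => ?_
    simp [Finset.sum_apply, cprob, hind]
  have t1 := condExp_add (μ := μ) (m := 𝓕) (hF1int.smul ((q : ℝ) ^ 2))
    ((hXint.smul (2 * (q : ℝ))).add (hint U hU))
  have t2 := condExp_smul (μ := μ) (m := 𝓕) ((q : ℝ) ^ 2) F1
  have t3 := condExp_add (μ := μ) (m := 𝓕) (hXint.smul (2 * (q : ℝ))) (hint U hU)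
  have t4 := condExp_smul (μ := μ) (m := 𝓕) (2 * (q : ℝ)) X
  have hnn : 0 ≤ᵐ[μ] μ[(fun ω => ((q : ℝ) * X ω + ind U ω) ^ 2)|𝓕] :=
    condExp_nonneg (Eventually.of_forall fun ω => sq_nonneg _)
  rw [hphi] at hnn
  filter_upwards [hnn, t1, t2, t3, t4, hF1c, hXc] with ω h0 e1 e2 e3 e4 e5 e6
  simp only [Pi.zero_apply, Pi.add_apply, Pi.smul_apply, smul_eq_mul] at h0 e1 e2 e3 e4
  rw [e1, e2, e3, e4, e5, e6] at h0
  have hcU : (μ[ind U|𝓕]) ω = cprob μ 𝓕 U ω := rfl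
  rw [hcU] at h0
  linarith

theorem stmt_13 {Ω : Type*} (𝓕 : MeasurableSpace Ω) {mΩ : MeasurableSpace Ω} (μ : Measure Ω)
    [IsProbabilityMeasure μ] (h𝓕 : 𝓕 ≤ mΩ)
    (A : ℕ → Set Ω) (hA : ∀ n, MeasurableSet (A n))
    (hdiv : ∀ᵐ ω ∂μ, Tendsto
      (fun N => ∑ k ∈ Finset.Icc 1 N, cprob μ 𝓕 (A k) ω) atTop atTop) :
    ∀ᵐ ω ∂μ,
      limsup (fun n => (∑ k ∈ Finset.Icc 1 n, cprob μ 𝓕 (A k) ω) ^ 2 /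
        (∑ i ∈ Finset.Icc 1 n, ∑ k ∈ Finset.Icc 1 n,
          cprob μ 𝓕 (A i ∩ A k) ω)) atTop ≤
      cprob μ 𝓕 (limsup A atTop) ω := by
  classical
  haveI : SigmaFinite (μ.trim h𝓕) := inferInstance
  have hA' : ∀ n, MeasurableSet[mΩ] (A n) := fun n => hA n
  set ind : Set Ω → Ω → ℝ := fun s => s.indicator fun _ => 1 with hind
  have hint : ∀ s : Set Ω, MeasurableSet[mΩ] s → Integrable (ind s) μ := fun s hs =>
    ind_integrable μ hs
  set U : ℕ → Set Ω := fun m => ⋃ k, ⋃ (_ : k ≥ m), A k with hUdef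
  have hUmeas : ∀ m, MeasurableSet[mΩ] (U m) := fun m =>
    MeasurableSet.iUnion fun k => MeasurableSet.iUnion fun _ => hA' k
  have hUanti : Antitone U := fun m m' hmm' =>
    Set.iUnion₂_subset fun k hk => Set.subset_iUnion₂ (s := fun k _ => A k) k (hmm'.trans hk)
  have hL : limsup A atTop = ⋂ m, U m := by
    rw [limsup_eq_iInf_iSup_of_nat]
    simp only [hUdef, Set.iSup_eq_iUnion, Set.iInf_eq_iInter]
  have hLmeas : MeasurableSet[mΩ] (limsup A atTop) := limsup_measurable hA'
  have hLU : ∀ m, limsup A atTop ⊆ U m := fun m => hL ▸ Set.iInter_subset _ m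
  -- nonnegativity facts
  have h1 : ∀ᵐ ω ∂μ, ∀ i k : ℕ, 0 ≤ cprob μ 𝓕 (A i ∩ A k) ω :=
    ae_all_iff.2 fun i => ae_all_iff.2 fun k =>
      condExp_nonneg (Eventually.of_forall fun ω =>
        Set.indicator_nonneg (fun _ _ => zero_le_one) ω)
  have h2 : ∀ᵐ ω ∂μ, ∀ k : ℕ, 0 ≤ cprob μ 𝓕 (A k) ω :=
    ae_all_iff.2 fun k =>
      condExp_nonneg (Eventually.of_forall fun ω =>
        Set.indicator_nonneg (fun _ _ => zero_le_one) ω)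
  have h3 : ∀ᵐ ω ∂μ, ∀ m : ℕ, 0 ≤ cprob μ 𝓕 (U m) ω :=
    ae_all_iff.2 fun m =>
      condExp_nonneg (Eventually.of_forall fun ω =>
        Set.indicator_nonneg (fun _ _ => zero_le_one) ω)
  have h4 : ∀ᵐ ω ∂μ, ∀ m : ℕ, cprob μ 𝓕 (limsup A atTop) ω ≤ cprob μ 𝓕 (U m) ω :=
    ae_all_iff.2 fun m =>
      condExp_mono (hint _ hLmeas) (hint _ (hUmeas m))
        (Eventually.of_forall fun ω =>
          Set.indicator_le_indicator_of_subset (hLU m) (fun _ => zero_le_one) ω)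
  have h5 : ∀ᵐ ω ∂μ, ∀ m n : ℕ, ∀ q : ℚ, 0 ≤ (q : ℝ) ^ 2 *
        (∑ i ∈ Finset.Ioc m n, ∑ k ∈ Finset.Ioc m n, cprob μ 𝓕 (A i ∩ A k) ω)
      + 2 * (q : ℝ) * (∑ k ∈ Finset.Ioc m n, cprob μ 𝓕 (A k) ω) + cprob μ 𝓕 (U m) ω :=
    ae_all_iff.2 fun m => ae_all_iff.2 fun n => ae_all_iff.2 fun q =>
      cs_ineq μ 𝓕 A hA' (U m) (hUmeas m) m n
        (fun k hk => Set.subset_iUnion₂ (s := fun k _ => A k) k hk.le) q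
  -- the decreasing minima F
  set F : ℕ → Ω → ℝ := fun m ω =>
    (Finset.range (m + 1)).inf' Finset.nonempty_range_add_one fun j => cprob μ 𝓕 (U j) ω with hFdef
  have hcmeas : ∀ j : ℕ, Measurable[mΩ] (cprob μ 𝓕 (U j)) := fun j =>
    (stronglyMeasurable_condExp.mono h𝓕).measurable
  have hFmeas' : ∀ (s : Finset ℕ) (hs : s.Nonempty),
      Measurable[mΩ] fun ω => s.inf' hs fun j => cprob μ 𝓕 (U j) ω := by
    intro s hs
    refine Finset.Nonempty.cons_induction (motive := fun s hs =>
      Measurable[mΩ] fun ω => s.inf' hs fun j => cprob μ 𝓕 (U j) ω) ?_ ?_ hs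
    · intro a; simpa using hcmeas a
    · intro a s ha hs ih
      have heq : (fun ω => (Finset.cons a s ha).inf' (Finset.cons_nonempty ha)
            fun j => cprob μ 𝓕 (U j) ω)
          = fun ω => min (cprob μ 𝓕 (U a) ω) (s.inf' hs fun j => cprob μ 𝓕 (U j) ω) := by
        funext ω
        rw [Finset.inf'_cons]
      rw [heq]
      exact (hcmeas a).min ih
  have hFmeas : ∀ m, Measurable[mΩ] (F m) := fun m => hFmeas' _ _
  have hFanti : ∀ ω, Antitone fun m => F m ω := by
    intro ω m m' hmm'
    exact Finset.inf'_mono _ (Finset.range_subset_range.2 (by omega)) _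
  have hFle : ∀ m ω, F m ω ≤ cprob μ 𝓕 (U m) ω := fun m ω =>
    Finset.inf'_le _ (Finset.self_mem_range_succ m)
  have hFle0 : ∀ m ω, F m ω ≤ cprob μ 𝓕 (U 0) ω := fun m ω =>
    Finset.inf'_le _ (by simp)
  have hFge : ∀ᵐ ω ∂μ, ∀ m, cprob μ 𝓕 (limsup A atTop) ω ≤ F m ω := by
    filter_upwards [h4] with ω hω m
    exact Finset.le_inf' _ _ fun j _ => hω j
  set g0 : Ω → ℝ := fun ω => |cprob μ 𝓕 (U 0) ω| + |cprob μ 𝓕 (limsup A atTop) ω| with hg0def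
  have hg0int : Integrable g0 μ := integrable_condExp.abs.add integrable_condExp.abs
  have hbound : ∀ m, ∀ᵐ ω ∂μ, ‖F m ω‖ ≤ g0 ω := by
    intro m
    filter_upwards [hFge] with ω hω
    rw [Real.norm_eq_abs, abs_le]
    constructor
    · have := neg_abs_le (cprob μ 𝓕 (limsup A atTop) ω)
      have := hω m
      have := abs_nonneg (cprob μ 𝓕 (U 0) ω)
      rw [hg0def]
      simp only
      linarith
    · have := le_abs_self (cprob μ 𝓕 (U 0) ω)
      have := hFle0 m ω
      have := abs_nonneg (cprob μ 𝓕 (limsup A atTop) ω)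
      rw [hg0def]
      simp only
      linarith
  have hFtends : ∀ᵐ ω ∂μ, Tendsto (fun m => F m ω) atTop (𝓝 (⨅ m, F m ω)) := by
    filter_upwards [hFge] with ω hω
    exact tendsto_atTop_ciInf (hFanti ω) ⟨cprob μ 𝓕 (limsup A atTop) ω, by
      rintro _ ⟨m, rfl⟩; exact hω m⟩
  have hFinfmeas : AEStronglyMeasurable[mΩ] (fun ω => ⨅ m, F m ω) μ :=
    aestronglyMeasurable_of_tendsto_ae atTop
      (fun m => (hFmeas m).aestronglyMeasurable) hFtends
  have hFmint : ∀ m, Integrable (F m) μ := fun m =>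
    Integrable.mono' hg0int (hFmeas m).aestronglyMeasurable (hbound m)
  have hIntTendsto : Tendsto (fun m => ∫ ω, F m ω ∂μ) atTop (𝓝 (∫ ω, (⨅ m, F m ω) ∂μ)) :=
    tendsto_integral_of_dominated_convergence g0
      (fun m => (hFmeas m).aestronglyMeasurable) hg0int hbound hFtends
  have hintc : ∀ (s : Set Ω), MeasurableSet[mΩ] s →
      ∫ ω, cprob μ 𝓕 s ω ∂μ = (μ s).toReal := by
    intro s hs
    show ∫ ω, (μ[s.indicator (fun _ => (1 : ℝ))|𝓕]) ω ∂μ = (μ s).toReal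
    rw [integral_condExp h𝓕]
    exact integral_ind μ hs
  have hIntFm_le : ∀ m, ∫ ω, F m ω ∂μ ≤ (μ (U m)).toReal := by
    intro m
    calc ∫ ω, F m ω ∂μ ≤ ∫ ω, cprob μ 𝓕 (U m) ω ∂μ :=
          integral_mono (hFmint m) integrable_condExp (hFle m)
      _ = (μ (U m)).toReal := hintc _ (hUmeas m)
  have hμtends : Tendsto (fun m => (μ (U m)).toReal) atTop
      (𝓝 ((μ (limsup A atTop)).toReal)) := by
    have h := tendsto_measure_iInter_atTop
      (fun m => (hUmeas m).nullMeasurableSet) hUanti ⟨0, measure_ne_top μ _⟩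
    rw [← hL] at h
    exact (ENNReal.tendsto_toReal (measure_ne_top μ _)).comp h
  have hFinfle : ∫ ω, (⨅ m, F m ω) ∂μ ≤ (μ (limsup A atTop)).toReal :=
    le_of_tendsto_of_tendsto' hIntTendsto hμtends hIntFm_le
  have hcLint : Integrable (cprob μ 𝓕 (limsup A atTop)) μ := integrable_condExp
  have hd : ∀ᵐ ω ∂μ, 0 ≤ (⨅ m, F m ω) - cprob μ 𝓕 (limsup A atTop) ω := by
    filter_upwards [hFge] with ω hω
    have : cprob μ 𝓕 (limsup A atTop) ω ≤ ⨅ m, F m ω := le_ciInf hω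
    linarith
  have hFinfint : Integrable (fun ω => ⨅ m, F m ω) μ := by
    refine Integrable.mono' hg0int hFinfmeas ?_
    filter_upwards [hFge] with ω hω
    have hbdd : BddBelow (Set.range fun m => F m ω) :=
      ⟨cprob μ 𝓕 (limsup A atTop) ω, by rintro _ ⟨m, rfl⟩; exact hω m⟩
    have hub : (⨅ m, F m ω) ≤ cprob μ 𝓕 (U 0) ω := (ciInf_le hbdd 0).trans (hFle 0 ω)
    have hlb : cprob μ 𝓕 (limsup A atTop) ω ≤ ⨅ m, F m ω := le_ciInf hω
    rw [Real.norm_eq_abs, abs_le]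
    constructor
    · have := neg_abs_le (cprob μ 𝓕 (limsup A atTop) ω)
      have := abs_nonneg (cprob μ 𝓕 (U 0) ω)
      rw [hg0def]; simp only; linarith
    · have := le_abs_self (cprob μ 𝓕 (U 0) ω)
      have := abs_nonneg (cprob μ 𝓕 (limsup A atTop) ω)
      rw [hg0def]; simp only; linarith
  have hintzero : ∫ ω, ((⨅ m, F m ω) - cprob μ 𝓕 (limsup A atTop) ω) ∂μ = 0 := by
    have hle : ∫ ω, ((⨅ m, F m ω) - cprob μ 𝓕 (limsup A atTop) ω) ∂μ ≤ 0 := by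
      rw [integral_sub hFinfint hcLint, hintc _ hLmeas]
      linarith
    have hge : 0 ≤ ∫ ω, ((⨅ m, F m ω) - cprob μ 𝓕 (limsup A atTop) ω) ∂μ :=
      integral_nonneg_of_ae hd
    linarith
  have h6 : ∀ᵐ ω ∂μ, (⨅ m, F m ω) = cprob μ 𝓕 (limsup A atTop) ω := by
    have := (integral_eq_zero_iff_of_nonneg_ae hd
      (hFinfint.sub hcLint)).1 hintzero
    filter_upwards [this] with ω hω
    have : (⨅ m, F m ω) - cprob μ 𝓕 (limsup A atTop) ω = 0 := hω
    linarith
  -- pointwise argument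
  filter_upwards [hdiv, h1, h2, h3, h5, h6] with ω hdivω hik hk hcm hquad hinf
  set f : ℕ → ℝ := fun n => ∑ k ∈ Finset.Icc 1 n, cprob μ 𝓕 (A k) ω with hfdef
  set g : ℕ → ℝ := fun n =>
    ∑ i ∈ Finset.Icc 1 n, ∑ k ∈ Finset.Icc 1 n, cprob μ 𝓕 (A i ∩ A k) ω with hgdef
  have hgnn : ∀ n, 0 ≤ g n := fun n =>
    Finset.sum_nonneg fun i _ => Finset.sum_nonneg fun k _ => hik i k
  have hfnn : ∀ n, 0 ≤ f n := fun n => Finset.sum_nonneg fun k _ => hk k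
  have hsubset : ∀ m n : ℕ, Finset.Ioc m n ⊆ Finset.Icc 1 n := by
    intro m n k hk'
    simp only [Finset.mem_Ioc] at hk'
    simp only [Finset.mem_Icc]
    omega
  have hquad' : ∀ m n : ℕ, m ≤ n → (f n - f m) ^ 2 ≤ g n * cprob μ 𝓕 (U m) ω := by
    intro m n hmn
    have hS : f n - f m = ∑ k ∈ Finset.Ioc m n, cprob μ 𝓕 (A k) ω := by
      rw [hfdef]
      simp only
      rw [show Finset.Icc 1 n = Finset.Ioc 0 n from by rw [← Finset.Icc_add_one_left_eq_Ioc, zero_add],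
        show Finset.Icc 1 m = Finset.Ioc 0 m from by rw [← Finset.Icc_add_one_left_eq_Ioc, zero_add],
        ← Finset.sum_Ioc_consecutive _ (Nat.zero_le m) hmn]
      ring
    have hGle : (∑ i ∈ Finset.Ioc m n, ∑ k ∈ Finset.Ioc m n, cprob μ 𝓕 (A i ∩ A k) ω)
        ≤ g n := by
      calc (∑ i ∈ Finset.Ioc m n, ∑ k ∈ Finset.Ioc m n, cprob μ 𝓕 (A i ∩ A k) ω)
          ≤ ∑ i ∈ Finset.Ioc m n, ∑ k ∈ Finset.Icc 1 n, cprob μ 𝓕 (A i ∩ A k) ω :=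
            Finset.sum_le_sum fun i _ =>
              Finset.sum_le_sum_of_subset_of_nonneg (hsubset m n) fun k _ _ => hik i k
        _ ≤ g n := Finset.sum_le_sum_of_subset_of_nonneg (hsubset m n)
              fun i _ _ => Finset.sum_nonneg fun k _ => hik i k
    refine quad_aux (hgnn n) fun q => ?_
    have hq := hquad m n q
    rw [← hS] at hq
    nlinarith [sq_nonneg (q : ℝ)]
  suffices hsuff : ∀ m, limsup (fun n => f n ^ 2 / g n) atTop ≤ cprob μ 𝓕 (U m) ω by
    rw [← hinf]
    exact le_ciInf fun m => Finset.le_inf' _ _ fun j _ => hsuff j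
  intro m
  have key : ∀ j : ℕ, limsup (fun n => f n ^ 2 / g n) atTop
      ≤ (1 + 1 / (j + 1 : ℝ)) ^ 2 * cprob μ 𝓕 (U m) ω := by
    intro j
    set ε : ℝ := 1 / (j + 1 : ℝ) with hεdef
    have hε : 0 < ε := by positivity
    refine limsup_le_of_le
      (isCoboundedUnder_le_of_le atTop fun n => div_nonneg (sq_nonneg (f n)) (hgnn n)) ?_
    have hev : ∀ᶠ n in atTop, (1 + ε) / ε * f m + 1 ≤ f n :=
      hdivω.eventually_ge_atTop _
    filter_upwards [hev, eventually_ge_atTop m] with n hfn hmn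
    have hfm := hfnn m
    have h3' : (1 + ε) * f m + ε ≤ ε * f n := by
      have hmul : ε * ((1 + ε) / ε * f m + 1) = (1 + ε) * f m + ε := by
        field_simp
      have := mul_le_mul_of_nonneg_left hfn hε.le
      rw [hmul] at this
      linarith
    have h2' : f n ≤ (1 + ε) * (f n - f m) := by nlinarith
    have hpos : 1 ≤ f n - f m := by
      have h4' : f m ≤ (1 + ε) / ε * f m := by
        refine le_mul_of_one_le_left hfm ?_
        rw [le_div_iff₀ hε]
        linarith
      linarith
    have hcs := hquad' m n hmn
    have hsq : f n ^ 2 ≤ (1 + ε) ^ 2 * (g n * cprob μ 𝓕 (U m) ω) := by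
      have h5' : f n ^ 2 ≤ (1 + ε) ^ 2 * (f n - f m) ^ 2 := by nlinarith [hfnn n]
      nlinarith [sq_nonneg (1 + ε)]
    rcases (hgnn n).eq_or_lt with hg0 | hg0
    · exfalso
      rw [← hg0] at hsq
      nlinarith [hfnn n]
    · rw [div_le_iff₀ hg0]
      calc f n ^ 2 ≤ (1 + ε) ^ 2 * (g n * cprob μ 𝓕 (U m) ω) := hsq
        _ = (1 + ε) ^ 2 * cprob μ 𝓕 (U m) ω * g n := by ring
  have hlim : Tendsto (fun j : ℕ => (1 + 1 / (j + 1 : ℝ)) ^ 2 * cprob μ 𝓕 (U m) ω) atTop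
      (𝓝 ((1 + 0) ^ 2 * cprob μ 𝓕 (U m) ω)) := by
    refine Tendsto.mul_const _ (Tendsto.pow ?_ 2)
    exact tendsto_const_nhds.add tendsto_one_div_add_atTop_nhds_zero_nat
  have hfinal := ge_of_tendsto' hlim key
  simpa using hfinal
end

section
/- Let {Aₙ} be events conditionally independent given a sub-σ-algebra ℱ, and suppose there is a function ψ with ∑_{i=1}^{ψ(N)} P(Aᵢ | ℱ) ≥ N a.s. for all N ≥ 1. Then for all n ≥ 1, P(⋂_{i=n}^{ψ(n+N−1)} Aᵢᶜ | ℱ) ≤ e^{−N} almost surely. -/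
open MeasureTheory Filter

lemma ind_biInter_aux {Ω : Type*} (A : ℕ → Set Ω) (S : Finset ℕ) (ω : Ω) :
    (⋂ i ∈ S, A i).indicator (fun _ => (1:ℝ)) ω
      = ∏ i ∈ S, (A i).indicator (fun _ => (1:ℝ)) ω := by
  by_cases h : ω ∈ ⋂ i ∈ S, A i
  · rw [Set.indicator_of_mem h]
    simp only [Set.mem_iInter] at h
    exact (Finset.prod_eq_one fun i hi => Set.indicator_of_mem (h i hi) _).symm
  · rw [Set.indicator_of_notMem h]
    simp only [Set.mem_iInter, not_forall] at h
    obtain ⟨j, hj, hω⟩ := h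
    exact (Finset.prod_eq_zero hj (Set.indicator_of_notMem hω _)).symm

lemma prod_one_sub_aux (x : ℕ → ℝ) (S : Finset ℕ) :
    ∏ i ∈ S, (1 - x i) = ∑ T ∈ S.powerset, (-1:ℝ)^T.card * ∏ i ∈ T, x i := by
  have h : ∀ i ∈ S, (1:ℝ) - x i = (-x i) + 1 := fun i _ => by ring
  rw [Finset.prod_congr rfl h, Finset.prod_add]
  refine Finset.sum_congr rfl fun T _ => ?_
  have h2 : ∏ i ∈ T, (-x i) = ∏ i ∈ T, ((-1:ℝ) * x i) := by simp
  rw [h2, Finset.prod_mul_distrib, Finset.prod_const]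
  simp

lemma int_ind_aux {Ω : Type*} {mΩ : MeasurableSpace Ω} (μ : Measure Ω)
    [IsFiniteMeasure μ] {B : Set Ω} (hB : MeasurableSet B) :
    Integrable (B.indicator (fun _ => (1:ℝ))) μ :=
  (integrable_const (1:ℝ)).indicator hB

lemma cprob_compl_aux {Ω : Type*} {mΩ : MeasurableSpace Ω} (μ : Measure Ω)
    [IsProbabilityMeasure μ] (𝓕 : MeasurableSpace Ω) (h𝓕 : 𝓕 ≤ mΩ)
    (A : ℕ → Set Ω) (hA : ∀ n, MeasurableSet[mΩ] (A n))
    (hCI : ∀ S : Finset ℕ, cprob μ 𝓕 (⋂ i ∈ S, A i) =ᵐ[μ]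
      fun ω => ∏ i ∈ S, cprob μ 𝓕 (A i) ω) (S : Finset ℕ) :
    cprob μ 𝓕 (⋂ i ∈ S, (A i)ᶜ) =ᵐ[μ]
      fun ω => ∏ i ∈ S, (1 - cprob μ 𝓕 (A i) ω) := by
  classical
  have hfun : (⋂ i ∈ S, (A i)ᶜ).indicator (fun _ => (1:ℝ))
      = ∑ T ∈ S.powerset,
          ((-1:ℝ)^T.card) • (⋂ i ∈ T, A i).indicator (fun _ => (1:ℝ)) := by
    funext ω
    rw [ind_biInter_aux]
    have h1 : ∀ i ∈ S, ((A i)ᶜ).indicator (fun _ => (1:ℝ)) ω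
        = 1 - (A i).indicator (fun _ => (1:ℝ)) ω := by
      intro i _
      by_cases h : ω ∈ A i <;> simp [h]
    rw [Finset.prod_congr rfl h1, prod_one_sub_aux, Finset.sum_apply]
    refine Finset.sum_congr rfl fun T _ => ?_
    rw [Pi.smul_apply, smul_eq_mul, ind_biInter_aux]
  have hmeas : ∀ T : Finset ℕ, MeasurableSet[mΩ] (⋂ i ∈ T, A i) := fun T =>
    Finset.measurableSet_biInter T fun i _ => hA i
  have hint : ∀ T : Finset ℕ,
      Integrable ((⋂ i ∈ T, A i).indicator (fun _ => (1:ℝ))) μ := fun T =>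
    int_ind_aux μ (hmeas T)
  have h1 : μ[∑ T ∈ S.powerset,
        ((-1:ℝ)^T.card) • (⋂ i ∈ T, A i).indicator (fun _ => (1:ℝ))|𝓕]
      =ᵐ[μ] ∑ T ∈ S.powerset,
        μ[((-1:ℝ)^T.card) • (⋂ i ∈ T, A i).indicator (fun _ => (1:ℝ))|𝓕] :=
    condExp_finset_sum (fun T _ => (hint T).smul _) 𝓕
  have h3 : ∀ᵐ ω ∂μ, ∀ T ∈ S.powerset,
      (μ[((-1:ℝ)^T.card) • (⋂ i ∈ T, A i).indicator (fun _ => (1:ℝ))|𝓕]) ω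
        = ((-1:ℝ)^T.card)
            * (μ[(⋂ i ∈ T, A i).indicator (fun _ => (1:ℝ))|𝓕]) ω := by
    rw [eventually_all_finset]
    intro T _
    filter_upwards [condExp_smul (μ := μ) (m := 𝓕) ((-1:ℝ)^T.card)
      ((⋂ i ∈ T, A i).indicator (fun _ => (1:ℝ)))] with ω h
    simpa using h
  have h2 : ∀ᵐ ω ∂μ, ∀ T ∈ S.powerset,
      (μ[(⋂ i ∈ T, A i).indicator (fun _ => (1:ℝ))|𝓕]) ω
        = ∏ i ∈ T, cprob μ 𝓕 (A i) ω := by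
    rw [eventually_all_finset]
    intro T _
    exact hCI T
  show μ[(⋂ i ∈ S, (A i)ᶜ).indicator (fun _ => (1:ℝ))|𝓕] =ᵐ[μ] _
  rw [hfun]
  filter_upwards [h1, h2, h3] with ω hω1 hω2 hω3
  rw [hω1, Finset.sum_apply]
  have hstep : ∑ T ∈ S.powerset,
      (μ[((-1:ℝ)^T.card) • (⋂ i ∈ T, A i).indicator (fun _ => (1:ℝ))|𝓕]) ω
      = ∑ T ∈ S.powerset, (-1:ℝ)^T.card * ∏ i ∈ T, cprob μ 𝓕 (A i) ω := by
    refine Finset.sum_congr rfl fun T hT => ?_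
    rw [hω3 T hT, hω2 T hT]
  rw [hstep, ← prod_one_sub_aux]

lemma cprob_mem_aux {Ω : Type*} {mΩ : MeasurableSpace Ω} (μ : Measure Ω)
    [IsProbabilityMeasure μ] (𝓕 : MeasurableSpace Ω) (h𝓕 : 𝓕 ≤ mΩ)
    {B : Set Ω} (hB : MeasurableSet[mΩ] B) :
    ∀ᵐ ω ∂μ, 0 ≤ cprob μ 𝓕 B ω ∧ cprob μ 𝓕 B ω ≤ 1 := by
  have h0 : 0 ≤ᵐ[μ] μ[B.indicator (fun _ => (1:ℝ))|𝓕] :=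
    condExp_nonneg (ae_of_all _ fun ω => Set.indicator_nonneg (fun _ _ => zero_le_one) ω)
  have h1 : μ[B.indicator (fun _ => (1:ℝ))|𝓕] ≤ᵐ[μ] μ[(fun _ => (1:ℝ))|𝓕] :=
    condExp_mono (int_ind_aux μ hB) (integrable_const 1)
      (ae_of_all _ fun ω => Set.indicator_le_self' (fun _ _ => zero_le_one) ω)
  have h2 : μ[(fun _ : Ω => (1:ℝ))|𝓕] = fun _ => (1:ℝ) := condExp_const h𝓕 1
  rw [h2] at h1
  filter_upwards [h0, h1] with ω hω0 hω1
  exact ⟨hω0, hω1⟩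

theorem stmt_17 {Ω : Type*} (𝓕 : MeasurableSpace Ω) {mΩ : MeasurableSpace Ω} (μ : Measure Ω)
    [IsProbabilityMeasure μ] (h𝓕 : 𝓕 ≤ mΩ)
    (A : ℕ → Set Ω) (hA : ∀ n, MeasurableSet (A n))
    (hCI : ∀ S : Finset ℕ, cprob μ 𝓕 (⋂ i ∈ S, A i) =ᵐ[μ]
      fun ω => ∏ i ∈ S, cprob μ 𝓕 (A i) ω)
    (ψ : ℕ → ℕ)
    (hψ : ∀ N : ℕ, 1 ≤ N → ∀ᵐ ω ∂μ,
      (N : ℝ) ≤ ∑ i ∈ Finset.Icc 1 (ψ N), cprob μ 𝓕 (A i) ω) :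
    ∀ n N : ℕ, 1 ≤ n → 1 ≤ N → ∀ᵐ ω ∂μ,
      cprob μ 𝓕 (⋂ i ∈ Finset.Icc n (ψ (n + N - 1)), (A i)ᶜ) ω ≤
        Real.exp (-(N : ℝ)) := by
  have hA' : ∀ n, MeasurableSet[mΩ] (A n) := fun i => hA i
  intro n N hn hN
  set M := n + N - 1 with hM
  have hM1 : 1 ≤ M := by omega
  have hp : ∀ᵐ ω ∂μ, ∀ i ∈ Finset.Icc 0 (ψ M),
      0 ≤ cprob μ 𝓕 (A i) ω ∧ cprob μ 𝓕 (A i) ω ≤ 1 := by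
    rw [eventually_all_finset]
    intro i _
    exact cprob_mem_aux μ 𝓕 h𝓕 (hA' i)
  filter_upwards [hp, hψ M hM1, cprob_compl_aux μ 𝓕 h𝓕 A hA' hCI (Finset.Icc n (ψ M))]
    with ω hpω hsum hcω
  set q : ℕ → ℝ := fun i => cprob μ 𝓕 (A i) ω with hq
  have hmem : ∀ a b : ℕ, ∀ i ∈ Finset.Icc a b, b ≤ ψ M → 0 ≤ q i ∧ q i ≤ 1 := by
    intro a b i hi hb
    refine hpω i (Finset.mem_Icc.2 ⟨Nat.zero_le _, ?_⟩)
    exact le_trans (Finset.mem_Icc.1 hi).2 hb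
  have hcard : ∑ i ∈ Finset.Icc 1 (ψ M), q i ≤ (ψ M : ℝ) := by
    calc ∑ i ∈ Finset.Icc 1 (ψ M), q i ≤ ∑ i ∈ Finset.Icc 1 (ψ M), (1:ℝ) :=
          Finset.sum_le_sum fun i hi => (hmem 1 (ψ M) i hi le_rfl).2
      _ = ((Finset.Icc 1 (ψ M)).card : ℝ) := by rw [Finset.sum_const]; simp
      _ = (ψ M : ℝ) := by rw [Nat.card_Icc]; simp
  have hψM : M ≤ ψ M := by
    have : (M : ℝ) ≤ (ψ M : ℝ) := le_trans hsum hcard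
    exact_mod_cast this
  have hnψ : n - 1 ≤ ψ M := by omega
  have hsplit : (∑ i ∈ Finset.Ioc 0 (n-1), q i) + ∑ i ∈ Finset.Ioc (n-1) (ψ M), q i
      = ∑ i ∈ Finset.Ioc 0 (ψ M), q i :=
    Finset.sum_Ioc_consecutive q (Nat.zero_le _) hnψ
  have hIoc1 : Finset.Icc 1 (ψ M) = Finset.Ioc 0 (ψ M) := by
    rw [← Finset.Icc_add_one_left_eq_Ioc, zero_add]
  have hIoc2 : Finset.Icc n (ψ M) = Finset.Ioc (n-1) (ψ M) := by
    rw [← Finset.Icc_add_one_left_eq_Ioc]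
    congr 1
    omega
  have hsmall : ∑ i ∈ Finset.Ioc 0 (n-1), q i ≤ ((n:ℝ) - 1) := by
    calc ∑ i ∈ Finset.Ioc 0 (n-1), q i ≤ ∑ i ∈ Finset.Ioc 0 (n-1), (1:ℝ) := by
          refine Finset.sum_le_sum fun i hi => ?_
          have hi' : i ∈ Finset.Icc 0 (ψ M) := by
            rw [Finset.mem_Icc]
            rw [Finset.mem_Ioc] at hi
            exact ⟨Nat.zero_le _, by omega⟩
          exact (hpω i hi').2
      _ = ((n:ℝ) - 1) := by
          rw [Finset.sum_const, Nat.card_Ioc, nsmul_eq_mul, mul_one]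
          have h1 : n - 1 - 0 = n - 1 := rfl
          rw [h1, Nat.cast_sub hn, Nat.cast_one]
  have hMcast : (M : ℝ) = (n:ℝ) + (N:ℝ) - 1 := by
    have h : (M : ℕ) + 1 = n + N := by omega
    have h2 : ((M : ℕ) : ℝ) + 1 = (n:ℝ) + (N:ℝ) := by exact_mod_cast h
    linarith
  have hbig : (N : ℝ) ≤ ∑ i ∈ Finset.Icc n (ψ M), q i := by
    rw [hIoc2]
    rw [hIoc1] at hsum
    linarith [hsplit, hsmall, hsum]
  rw [hcω]
  calc ∏ i ∈ Finset.Icc n (ψ M), (1 - q i)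
      ≤ ∏ i ∈ Finset.Icc n (ψ M), Real.exp (-(q i)) := by
        refine Finset.prod_le_prod (fun i hi => ?_) (fun i hi => ?_)
        · have := hmem n (ψ M) i hi le_rfl
          linarith [this.2]
        · have := Real.add_one_le_exp (-(q i))
          linarith
    _ = Real.exp (-(∑ i ∈ Finset.Icc n (ψ M), q i)) := by
        rw [← Real.exp_sum]
        congr 1
        rw [Finset.sum_neg_distrib]
    _ ≤ Real.exp (-(N:ℝ)) := Real.exp_le_exp.2 (by linarith)
end
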